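/- arXiv:2302.02156 — 2 statements merged into one kernel-verified Lean document; each statement's English description precedes it below -/
import Mathlib

section
/- Any location estimator μ̂ on n×d datasets satisfying the weak exact fit property (if all data points lie in a lower-dimensional affine subspace then μ̂ lies in that subspace) has finite-sample cellwise breakdown value at most ⌈n/d⌉/n at every dataset X. -/
open Finset

/-- Any location estimator satisfying the weak exact fit property (if all data
points lie in a lower-dimensional affine subspace then the estimate lies in that
subspace) has finite-sample cellwise breakdown value at most `⌈n/d⌉/n`: already
corruptions replacing at most `⌈n/d⌉` cells per column can carry the estimate
arbitrarily far away. -/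
theorem location_cellwise_breakdown (n d : ℕ) (hn : 0 < n) (hd : 0 < d)
    (muhat : (Fin n → Fin d → ℝ) → (Fin d → ℝ))
    (hEFP : ∀ (X : Fin n → Fin d → ℝ) (S : AffineSubspace ℝ (Fin d → ℝ)),
      S ≠ ⊤ → (∀ i, X i ∈ S) → muhat X ∈ S)
    (X : Fin n → Fin d → ℝ) :
    ∀ M : ℝ, ∃ Y : Fin n → Fin d → ℝ,
      (∀ j, (Finset.univ.filter (fun i => Y i j ≠ X i j)).card ≤ ⌈(n : ℝ) / d⌉₊) ∧
      M < ‖muhat Y - muhat X‖ := by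
  intro M
  have hdR : (0 : ℝ) < d := by exact_mod_cast hd
  set s : ℝ := ∑ j, muhat X j with hs
  set t : ℝ := s + d * (|M| + 1) with ht
  set S : AffineSubspace ℝ (Fin d → ℝ) :=
    { carrier := {y | ∑ j, y j = t}
      smul_vsub_vadd_mem' := by
        intro c p1 p2 p3 h1 h2 h3
        simp only [Set.mem_setOf_eq] at *
        have : ∀ j, (c • (p1 -ᵥ p2) +ᵥ p3) j = c * (p1 j - p2 j) + p3 j := by
          intro j; rfl
        simp only [this, Finset.sum_add_distrib, Finset.mul_sum]
        rw [show (∑ j, c * (p1 j - p2 j)) = c * ((∑ j, p1 j) - ∑ j, p2 j) by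
          rw [← Finset.mul_sum, Finset.sum_sub_distrib]]
        rw [h1, h2, h3]; ring } with hSdef
  have memS : ∀ y : Fin d → ℝ, y ∈ S ↔ ∑ j, y j = t := by
    intro y; rfl
  have hSne : S ≠ ⊤ := by
    intro h
    have : (fun _ : Fin d => (t + 1) / d) ∈ S := h ▸ AffineSubspace.mem_top _ _ _
    rw [memS] at this
    rw [Finset.sum_const, Finset.card_univ, Fintype.card_fin, nsmul_eq_mul,
      mul_div_cancel₀ _ (ne_of_gt hdR)] at this
    linarith
  set Y : Fin n → Fin d → ℝ := fun i j =>
    if (i : ℕ) % d = (j : ℕ) then t - ∑ k ∈ univ.erase j, X i k else X i j with hY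
  have hrows : ∀ i, Y i ∈ S := by
    intro i
    rw [memS]
    set j0 : Fin d := ⟨(i : ℕ) % d, Nat.mod_lt _ hd⟩ with hj0
    rw [← Finset.add_sum_erase _ _ (Finset.mem_univ j0)]
    have h1 : Y i j0 = t - ∑ k ∈ univ.erase j0, X i k := by
      simp only [hY]; rw [if_pos rfl]
    have h2 : ∀ j ∈ univ.erase j0, Y i j = X i j := by
      intro j hj
      have hne : j ≠ j0 := (Finset.mem_erase.mp hj).1
      simp only [hY]
      rw [if_neg]
      intro hcon
      exact hne (Fin.ext hcon.symm)
    rw [h1, Finset.sum_congr rfl h2]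
    ring
  refine ⟨Y, ?_, ?_⟩
  · intro j
    have hsub : (Finset.univ.filter (fun i => Y i j ≠ X i j)) ⊆
        (Finset.univ.filter (fun i : Fin n => (i : ℕ) % d = (j : ℕ))) := by
      intro i hi
      simp only [Finset.mem_filter, Finset.mem_univ, true_and] at hi ⊢
      by_contra hcon
      apply hi
      simp only [hY]; rw [if_neg hcon]
    refine le_trans (Finset.card_le_card hsub) ?_
    have : (Finset.univ.filter (fun i : Fin n => (i : ℕ) % d = (j : ℕ))).card ≤
        (Finset.range ⌈(n : ℝ) / d⌉₊).card := by
      refine Finset.card_le_card_of_injOn (fun i => (i : ℕ) / d) ?_ ?_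
      · intro i hi
        simp only [Finset.mem_coe, Finset.mem_range]
        rw [Nat.lt_ceil]
        calc ((((i : ℕ) / d : ℕ)) : ℝ) ≤ (i : ℕ) / (d : ℝ) := Nat.cast_div_le
          _ < n / d := by
            gcongr
            exact_mod_cast i.isLt
      · intro a ha b hb hab
        simp only [Finset.coe_filter, Finset.mem_univ, true_and, Set.mem_setOf_eq] at ha hb
        have : (a : ℕ) = (b : ℕ) := by
          conv_lhs => rw [← Nat.div_add_mod (a : ℕ) d]
          conv_rhs => rw [← Nat.div_add_mod (b : ℕ) d]
          simp only at hab; rw [hab, ha, hb]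
        exact Fin.ext this
    simpa using this
  · have hmem := hEFP Y S hSne hrows
    rw [memS] at hmem
    set v : Fin d → ℝ := muhat Y - muhat X with hv
    have hsum : ∑ j, v j = d * (|M| + 1) := by
      have : ∑ j, v j = (∑ j, muhat Y j) - ∑ j, muhat X j := by
        rw [← Finset.sum_sub_distrib]; rfl
      rw [this, hmem, ← hs, ht]; ring
    have hle : |∑ j, v j| ≤ d * ‖v‖ := by
      calc |∑ j, v j| ≤ ∑ j, |v j| := Finset.abs_sum_le_sum_abs _ _
        _ ≤ ∑ _j : Fin d, ‖v‖ := by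
            apply Finset.sum_le_sum
            intro j _
            exact (Real.norm_eq_abs (v j)) ▸ norm_le_pi_norm v j
        _ = d * ‖v‖ := by
            rw [Finset.sum_const, Finset.card_univ, Fintype.card_fin, nsmul_eq_mul]
    rw [hsum] at hle
    have habs : |(d : ℝ) * (|M| + 1)| = d * (|M| + 1) := by
      rw [abs_of_nonneg]; positivity
    rw [habs] at hle
    have : |M| + 1 ≤ ‖v‖ := by
      rw [mul_le_mul_iff_right₀ hdR] at hle; exact hle
    calc M ≤ |M| := le_abs_self M
      _ < |M| + 1 := by linarith
      _ ≤ ‖v‖ := this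
end

section
/- Any covariance estimator Σ̂ satisfying the singular exact fit property (if all data points lie in a lower-dimensional affine subspace then Σ̂(X) is singular) has cellwise implosion breakdown value at most ⌈(n−1)/d⌉/n at every n×d dataset X. -/
open Finset

/-- Any covariance estimator satisfying the singular exact fit property (if all
data points lie in a lower-dimensional affine subspace then the estimated
covariance matrix is singular) has cellwise implosion breakdown value at most
`⌈(n−1)/d⌉/n`: replacing at most `⌈(n−1)/d⌉` cells per column can make the
estimated covariance matrix singular (smallest eigenvalue zero). -/
theorem covariance_cellwise_implosion (n d : ℕ) (hn : 0 < n) (hd : 0 < d)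
    (Sigmahat : (Fin n → Fin d → ℝ) → Matrix (Fin d) (Fin d) ℝ)
    (hEFP : ∀ (X : Fin n → Fin d → ℝ) (S : AffineSubspace ℝ (Fin d → ℝ)),
      S ≠ ⊤ → (∀ i, X i ∈ S) → (Sigmahat X).det = 0)
    (X : Fin n → Fin d → ℝ) :
    ∃ Y : Fin n → Fin d → ℝ,
      (∀ j, (Finset.univ.filter (fun i => Y i j ≠ X i j)).card ≤
          ⌈((n : ℝ) - 1) / d⌉₊) ∧
      (Sigmahat Y).det = 0 := by
  haveI : NeZero n := ⟨hn.ne'⟩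
  set m := ⌈((n : ℝ) - 1) / d⌉₊ with hm
  set b := ∑ j, X 0 j with hb
  set col : Fin n → Fin d := fun i => ⟨(i.val - 1) % d, Nat.mod_lt _ hd⟩ with hcol
  set Y : Fin n → Fin d → ℝ := fun i j =>
    if i ≠ 0 ∧ j = col i then b - ∑ j' ∈ univ.erase (col i), X i j' else X i j with hY
  have hsum : ∀ i, ∑ j, Y i j = b := by
    intro i
    by_cases hi : i = 0
    · subst hi; simp [hY, hb]
    · rw [← Finset.add_sum_erase _ _ (Finset.mem_univ (col i))]
      have h1 : Y i (col i) = b - ∑ j' ∈ univ.erase (col i), X i j' := by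
        simp [hY, hi]
      have h2 : ∀ j ∈ univ.erase (col i), Y i j = X i j := by
        intro j hj
        simp only [Finset.mem_erase] at hj
        simp [hY, hj.1]
      rw [h1, Finset.sum_congr rfl h2]
      ring
  refine ⟨Y, ?_, ?_⟩
  · intro j
    have hsub : (univ.filter (fun i => Y i j ≠ X i j)) ⊆
        univ.filter (fun i : Fin n => i ≠ 0 ∧ j = col i) := by
      intro i hi
      simp only [Finset.mem_filter, Finset.mem_univ, true_and] at hi ⊢
      by_contra h
      exact hi (by simp [hY, h])
    refine le_trans (Finset.card_le_card hsub) ?_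
    have hcard : (univ.filter (fun i : Fin n => i ≠ 0 ∧ j = col i)).card ≤
        (Finset.range m).card := by
      apply Finset.card_le_card_of_injOn (fun i => (i.val - 1) / d)
      · intro i hi
        simp only [Finset.mem_coe, Finset.mem_filter, Finset.mem_univ, true_and] at hi
        simp only [Finset.mem_coe, Finset.mem_range]
        have h1 : 1 ≤ i.val := Nat.one_le_iff_ne_zero.mpr (fun h => hi.1 (Fin.ext h))
        have h2 : (i.val - 1 : ℕ) + 1 < n := by
          have := i.isLt; omega
        have hkr : ((i.val - 1 : ℕ) : ℝ) < (n : ℝ) - 1 := by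
          have : ((i.val - 1 : ℕ) : ℝ) + 1 < (n : ℝ) := by exact_mod_cast h2
          linarith
        have hr : (((i.val - 1) / d : ℕ) : ℝ) < (m : ℝ) := by
          calc (((i.val - 1) / d : ℕ) : ℝ) ≤ ((i.val - 1 : ℕ) : ℝ) / d := Nat.cast_div_le
            _ < ((n : ℝ) - 1) / d := by
                apply div_lt_div_of_pos_right hkr
                exact_mod_cast hd
            _ ≤ (m : ℝ) := Nat.le_ceil _
        exact_mod_cast hr
      · intro i1 h1 i2 h2 heq
        simp only [Finset.mem_coe, Finset.mem_filter, Finset.mem_univ, true_and] at h1 h2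
        have e1 : j.val = (i1.val - 1) % d := by rw [h1.2, hcol]
        have e2 : j.val = (i2.val - 1) % d := by rw [h2.2, hcol]
        have hv1 : 1 ≤ i1.val := Nat.one_le_iff_ne_zero.mpr (fun h => h1.1 (Fin.ext h))
        have hv2 : 1 ≤ i2.val := Nat.one_le_iff_ne_zero.mpr (fun h => h2.1 (Fin.ext h))
        have heq' : (i1.val - 1) / d = (i2.val - 1) / d := by simpa using heq
        have emod : (i1.val - 1) % d = (i2.val - 1) % d := e1.symm.trans e2
        have d1 := Nat.div_add_mod (i1.val - 1) d
        have d2 := Nat.div_add_mod (i2.val - 1) d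
        rw [heq', emod] at d1
        apply Fin.ext
        omega
    simpa using hcard
  · set S : AffineSubspace ℝ (Fin d → ℝ) :=
      { carrier := {x | ∑ j, x j = b}
        smul_vsub_vadd_mem' := by
          intro c p1 p2 p3 hp1 hp2 hp3
          simp only [Set.mem_setOf_eq] at *
          have key : ∀ j, (c • (p1 -ᵥ p2) +ᵥ p3) j = c * (p1 j - p2 j) + p3 j := by
            intro j
            simp [Pi.vadd_apply, Pi.smul_apply, vsub_eq_sub, smul_eq_mul]
          rw [Finset.sum_congr rfl (fun j _ => key j)]
          simp only [Finset.sum_add_distrib, ← Finset.mul_sum, Finset.sum_sub_distrib,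
            hp1, hp2, hp3]
          ring } with hS
    apply hEFP Y S
    · intro htop
      have hmem : (fun _ : Fin d => (b + 1) / d) ∈ S := htop ▸ AffineSubspace.mem_top ℝ _ _
      have : ∑ _j : Fin d, (b + 1) / (d : ℝ) = b := hmem
      rw [Finset.sum_const, Finset.card_univ, Fintype.card_fin, nsmul_eq_mul,
        mul_div_cancel₀] at this
      · linarith
      · exact_mod_cast hd.ne'
    · exact hsum
end
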